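/- arXiv:1404.6920 — 4 statements merged into one kernel-verified Lean document; each statement's English description precedes it below -/
import Mathlib

section
/- Define S(δ) = sup{ h(x,d) : x ∈ E, 0 < d ≤ δ } for δ > 0. Then for any two numbers a, b ∈ (0, c/r_min], one has S(a) = S(b). -/
/-!
The measure `μ` lives on `E`: by self-similarity the mass at distance `≥ t` from `E` is at most
the mass at distance `≥ t / r_max`, which tends to `0` as `t → ∞`. Hence a closed ball of radius
`< c` around a point of `f i (E)` only sees the piece `f i (E)`, and self-similarity gives
`h(f i x, r_i d) = h(x, d)` for `x ∈ E` and `r_i d < c`. Applying this with `r_i = r_min` shrinks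
any radius `d < c / r_min` below an arbitrary `δ > 0` without changing the density, so every such
`h(x, d)` is at most `S(δ)`; the endpoint `d = c / r_min` follows because `t ↦ (2t)^s` is left
continuous and `μ(B(x, t))` is monotone.
-/

open Metric Set MeasureTheory Filter Topology
open scoped ENNReal NNReal

noncomputable section

/-- `P^s_δ(A)`: the supremum of `∑ᵢ |Bᵢ|^s` over all `δ`-packings of `A`, i.e. countable
collections of pairwise disjoint closed balls centered at points of `A` with diameters `≤ δ`.
(Finite packings are represented by padding with empty balls of negative radius, which
contribute `0` to the sum.) -/
def packPre {X : Type*} [PseudoMetricSpace X] (s δ : ℝ) (A : Set X) : ℝ≥0∞ :=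
  ⨆ (cen : ℕ → X) (rad : ℕ → ℝ) (_ : ∀ i, cen i ∈ A)
    (_ : ∀ i, Metric.diam (Metric.closedBall (cen i) (rad i)) ≤ δ)
    (_ : Pairwise fun i j =>
      Disjoint (Metric.closedBall (cen i) (rad i)) (Metric.closedBall (cen j) (rad j))),
    ∑' i, ENNReal.ofReal (Metric.diam (Metric.closedBall (cen i) (rad i)) ^ s)

/-- The packing premeasure `P₀^s(A) = lim_{δ→0} P^s_δ(A)`; since `δ ↦ P^s_δ(A)` is
nondecreasing, the limit is the infimum over `δ > 0`. -/
def packPre0 {X : Type*} [PseudoMetricSpace X] (s : ℝ) (A : Set X) : ℝ≥0∞ :=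
  ⨅ (δ : ℝ) (_ : 0 < δ), packPre s δ A

/-- The packing measure `P^s(A) = inf { ∑ᵢ P₀^s(Uᵢ) : A ⊆ ⋃ᵢ Uᵢ }`. -/
def packM {X : Type*} [PseudoMetricSpace X] (s : ℝ) (A : Set X) : ℝ≥0∞ :=
  ⨅ (U : ℕ → Set X) (_ : A ⊆ ⋃ i, U i), ∑' i, packPre0 s (U i)

/-- The density function `h(x,d) = (2d)^s / μ(B(x,d))` (closed ball). -/
def densityh {X : Type*} [PseudoMetricSpace X] [MeasurableSpace X]
    (μ : MeasureTheory.Measure X) (s : ℝ) (x : X) (d : ℝ) : ℝ≥0∞ :=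
  ENNReal.ofReal ((2 * d) ^ s) / μ (Metric.closedBall x d)

/-- The discrete density function `h_k(x,d) = (2d)^s / μ_k(B'(x,d))` (open ball). -/
def densityhk {X : Type*} [PseudoMetricSpace X] [MeasurableSpace X]
    (μ : MeasureTheory.Measure X) (s : ℝ) (x : X) (d : ℝ) : ℝ≥0∞ :=
  ENNReal.ofReal ((2 * d) ^ s) / μ (Metric.ball x d)

/-- `fWord f σ k = f_{σ 0} ∘ ⋯ ∘ f_{σ (k-1)}`: the composition of the maps along the
first `k` letters of the code `σ` (so `fWord f σ k '' E` is the cylinder set `E_{σ(k)}`). -/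
def fWord {X : Type*} {N : ℕ} (f : Fin N → X → X) (σ : ℕ → Fin N) : ℕ → X → X
  | 0 => id
  | (k+1) => fWord f σ k ∘ f (σ k)

/-- `rWord rr σ k = r_{σ 0} ⋯ r_{σ (k-1)}`: the contraction ratio of `fWord f σ k`. -/
def rWord {N : ℕ} (rr : Fin N → ℝ) (σ : ℕ → Fin N) (k : ℕ) : ℝ :=
  ∏ j ∈ Finset.range k, rr (σ j)

/-- The algorithm's point sets: `algA f 1` is the set of fixed points of the maps `fᵢ`,
and `algA f (k+1) = ⋃ i, fᵢ(algA f k)`; `algA f 0` is unused (empty). -/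
def algA {X : Type*} {N : ℕ} (f : Fin N → X → X) : ℕ → Set X
  | 0 => ∅
  | 1 => {x | ∃ i, f i x = x}
  | (k+2) => ⋃ i, f i '' algA f (k+1)

/-- Composition of the maps `fᵢ` along a finite word `w`. -/
def wordComp {X : Type*} {N : ℕ} (f : Fin N → X → X) : ∀ k, (Fin k → Fin N) → X → X
  | 0, _ => id
  | (k+1), w => f (w 0) ∘ wordComp f k (w ∘ Fin.succ)

/-- The discrete measures `μ_k = ∑_{x ∈ A_k} r_{i_k(x)}^s · δ_x`: the sum runs over all
words `w` of length `k`, with weight `r_w^s` and Dirac mass at the point of `A_k` with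
address `w`, namely `f_w(fix(last letter of w))`; `algMu … 0` is unused (zero measure). -/
def algMu {X : Type*} [MeasurableSpace X] {N : ℕ} (f : Fin N → X → X)
    (rr : Fin N → ℝ) (fix : Fin N → X) (s : ℝ) : ℕ → MeasureTheory.Measure X
  | 0 => 0
  | (k+1) => ∑ w : Fin (k+1) → Fin N,
      ENNReal.ofReal ((∏ j, rr (w j)) ^ s) •
        MeasureTheory.Measure.dirac (wordComp f (k+1) w (fix (w (Fin.last k))))

/-- The algorithm's admissible set of radii
`D_k = {dist(x,y) : x, y ∈ A_k} ∩ [c̃, c̃/r_min]`. -/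
def algD {X : Type*} [PseudoMetricSpace X] {N : ℕ} (f : Fin N → X → X)
    (ct rmin : ℝ) (k : ℕ) : Set ℝ :=
  {d | (∃ x ∈ algA f k, ∃ y ∈ algA f k, d = dist x y) ∧ ct ≤ d ∧ d ≤ ct / rmin}

end

theorem LipschitzWith.infDist_le_mul_infDist {X : Type*} [PseudoMetricSpace X] {E : Set X}
    {g : X → X} {K : ℝ≥0} (hg : LipschitzWith K g)
    (hE : MapsTo g E E) (y : X) : infDist (g y) E ≤ K * infDist y E := by
  rcases E.eq_empty_or_nonempty with rfl | hne
  · simp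
  have := hne.to_subtype
  rw [infDist_eq_iInf (x := y), Real.mul_iInf_of_nonneg (NNReal.coe_nonneg K)]
  exact le_ciInf fun e => (infDist_le_dist_of_mem (hE e.2)).trans (hg.dist_le_mul _ _)

section SelfSimilar

variable {X ι : Type*} [MeasurableSpace X] [Fintype ι] {μ : Measure X} {f : ι → X → X}
  {p : ι → ℝ≥0∞}

theorem measure_le_of_forall_preimage_subset
    (hμ : ∀ A, MeasurableSet A → μ A = ∑ i, p i * μ (f i ⁻¹' A)) (hp : ∑ i, p i = 1)
    {A B : Set X} (hA : MeasurableSet A) (hAB : ∀ i, f i ⁻¹' A ⊆ B) : μ A ≤ μ B :=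
  calc μ A = ∑ i, p i * μ (f i ⁻¹' A) := hμ A hA
    _ ≤ ∑ i, p i * μ B := by gcongr with i; exact hAB i
    _ = μ B := by rw [← Finset.sum_mul, hp, one_mul]

variable [PseudoMetricSpace X] [OpensMeasurableSpace X] {E : Set X}

theorem measure_setOf_le_infDist_eq_zero [IsFiniteMeasure μ]
    (hμ : ∀ A, MeasurableSet A → μ A = ∑ i, p i * μ (f i ⁻¹' A)) (hp : ∑ i, p i = 1)
    {K : ℝ≥0} (hK : K < 1) (hf : ∀ i, LipschitzWith K (f i)) (hE : ∀ i, MapsTo (f i) E E)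
    {t : ℝ} (ht : 0 < t) : μ {y | t ≤ infDist y E} = 0 := by
  set W : ℕ → Set X := fun k => {y | t ≤ K ^ k * infDist y E}
  have hW : ∀ k, MeasurableSet (W k) := fun k =>
    measurableSet_le measurable_const (by fun_prop)
  have hW_anti : Antitone W := by
    refine antitone_nat_of_succ_le fun k y (hy : t ≤ _) => hy.trans ?_
    have : (K : ℝ) ^ (k + 1) ≤ K ^ k := pow_le_pow_of_le_one K.2 hK.le k.le_succ
    exact mul_le_mul_of_nonneg_right this infDist_nonneg
  have hW_empty : ⋂ k, W k = ∅ := by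
    refine eq_empty_of_forall_notMem fun y hy => ?_
    have hlim : Tendsto (fun k => (K : ℝ) ^ k * infDist y E) atTop (𝓝 0) := by
      simpa using (tendsto_pow_atTop_nhds_zero_of_lt_one K.2 hK).mul_const (infDist y E)
    obtain ⟨k, hk⟩ := (hlim.eventually (gt_mem_nhds ht)).exists
    exact (mem_iInter.1 hy k).not_gt hk
  have hW_mono : ∀ k, μ (W 0) ≤ μ (W k) := by
    refine fun k => monotone_nat_of_le_succ (f := fun k => μ (W k)) (fun k => ?_) (Nat.zero_le k)
    refine measure_le_of_forall_preimage_subset hμ hp (hW k) fun i y hy => ?_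
    calc t ≤ K ^ k * infDist (f i y) E := hy
      _ ≤ K ^ k * (K * infDist y E) := by
        gcongr; exact (hf i).infDist_le_mul_infDist (hE i) y
      _ = K ^ (k + 1) * infDist y E := by ring
  have hlim := tendsto_measure_iInter_atTop (fun k => (hW k).nullMeasurableSet) hW_anti
    ⟨0, measure_ne_top μ _⟩
  rw [hW_empty, measure_empty] at hlim
  simpa [W] using le_antisymm (ge_of_tendsto' hlim hW_mono) (zero_le)

theorem measure_compl_eq_zero_of_selfSimilar [IsFiniteMeasure μ]
    (hμ : ∀ A, MeasurableSet A → μ A = ∑ i, p i * μ (f i ⁻¹' A)) (hp : ∑ i, p i = 1)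
    {K : ℝ≥0} (hK : K < 1) (hf : ∀ i, LipschitzWith K (f i)) (hE : ∀ i, MapsTo (f i) E E)
    (hEc : IsClosed E) (hEne : E.Nonempty) : μ Eᶜ = 0 := by
  refine measure_mono_null (fun y hy => ?_) (measure_iUnion_null fun m : ℕ =>
    measure_setOf_le_infDist_eq_zero hμ hp hK hf hE (Nat.one_div_pos_of_nat (n := m)))
  obtain ⟨m, hm⟩ := exists_nat_one_div_lt ((hEc.notMem_iff_infDist_pos hEne).1 hy)
  exact mem_iUnion.2 ⟨m, hm.le⟩

theorem measure_closedBall_image_eq {r : ι → ℝ} {s c d : ℝ} {i : ι} {x : X}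
    (hμ : ∀ A, MeasurableSet A → μ A = ∑ j, ENNReal.ofReal (r j ^ s) * μ (f j ⁻¹' A))
    (hEc : μ Eᶜ = 0) (hri : 0 < r i) (hsim : ∀ x y, dist (f i x) (f i y) = r i * dist x y)
    (hsep : ∀ j, j ≠ i → ∀ u ∈ E, ∀ v ∈ E, c ≤ dist (f j u) (f i v)) (hx : x ∈ E)
    (hd : r i * d < c) :
    μ (closedBall (f i x) (r i * d)) = ENNReal.ofReal (r i ^ s) * μ (closedBall x d) := by
  have hpre : f i ⁻¹' closedBall (f i x) (r i * d) = closedBall x d := by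
    ext y
    simp only [mem_preimage, mem_closedBall, hsim]
    exact mul_le_mul_iff_right₀ hri
  have hother : ∀ j, j ≠ i → μ (f j ⁻¹' closedBall (f i x) (r i * d)) = 0 := by
    refine fun j hj => measure_mono_null ?_ hEc
    intro y (hy : dist _ _ ≤ _) (hyE : y ∈ E)
    linarith [hsep j hj y hyE x hx]
  rw [hμ _ measurableSet_closedBall, Finset.sum_eq_single i
    (fun j _ hj => by rw [hother j hj, mul_zero]) (by simp), hpre]

end SelfSimilar

section Density

variable {X : Type*} [PseudoMetricSpace X] [MeasurableSpace X] {μ : Measure X} {s : ℝ}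

theorem densityh_mul_eq {x y : X} {r d : ℝ} (hr : 0 < r) (hd : 0 ≤ d)
    (h : μ (closedBall y (r * d)) = ENNReal.ofReal (r ^ s) * μ (closedBall x d)) :
    densityh μ s y (r * d) = densityh μ s x d := by
  rw [densityh, densityh, h, show 2 * (r * d) = r * (2 * d) by ring,
    Real.mul_rpow hr.le (by positivity), ENNReal.ofReal_mul (by positivity)]
  exact ENNReal.mul_div_mul_left _ _ (ENNReal.ofReal_pos.2 (Real.rpow_pos_of_pos hr s)).ne'
    ENNReal.ofReal_ne_top

theorem densityh_le_of_forall_lt {x : X} {d : ℝ} {M : ℝ≥0∞} (hd : 0 < d)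
    (h : ∀ t ∈ Ioo 0 d, densityh μ s x t ≤ M) : densityh μ s x d ≤ M := by
  have hcont : ContinuousAt (fun t : ℝ => ENNReal.ofReal ((2 * t) ^ s)) d :=
    ENNReal.continuous_ofReal.continuousAt.comp
      ((continuousAt_const.mul continuousAt_id).rpow_const (Or.inl (mul_pos two_pos hd).ne'))
  have hlim : Tendsto (fun t => ENNReal.ofReal ((2 * t) ^ s) / μ (closedBall x d)) (𝓝[<] d)
      (𝓝 (densityh μ s x d)) :=
    ENNReal.Tendsto.div_const (hcont.tendsto.mono_left nhdsWithin_le_nhds)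
      (Or.inl (by positivity))
  refine le_of_tendsto hlim (eventually_of_mem (Ioo_mem_nhdsLT hd) fun t ht => ?_)
  exact (ENNReal.div_le_div_left (measure_mono (closedBall_subset_closedBall ht.2.le)) _).trans
    (h t ht)

theorem densityh_le_of_scaling {E : Set X} {g : X → X} {r ρ e : ℝ} {M : ℝ≥0∞}
    (hg : MapsTo g E E) (hr0 : 0 < r) (hr1 : r < 1) (he : 0 < e)
    (hscale : ∀ x ∈ E, ∀ d, 0 < d → r * d < ρ → densityh μ s (g x) (r * d) = densityh μ s x d)
    (hM : ∀ x ∈ E, ∀ d, 0 < d → d ≤ e → densityh μ s x d ≤ M) {x : X} (hx : x ∈ E) {d : ℝ}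
    (hd : 0 < d) (hdρ : r * d ≤ ρ) : densityh μ s x d ≤ M := by
  have descend : ∀ k : ℕ, ∀ x ∈ E, ∀ d, 0 < d → r * d < ρ → r ^ k * d ≤ e →
      densityh μ s x d ≤ M := by
    intro k
    induction k with
    | zero => exact fun x hx d hd _ hde => hM x hx d hd (by simpa using hde)
    | succ k ih =>
      intro x hx d hd hdρ hde
      rw [← hscale x hx d hd hdρ]
      refine ih (g x) (hg hx) (r * d) (by positivity) ?_ (by rwa [← mul_assoc, ← pow_succ])
      exact (mul_lt_of_lt_one_left (mul_pos hr0 hd) hr1).trans hdρ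
  have strict : ∀ t, 0 < t → r * t < ρ → densityh μ s x t ≤ M := fun t ht htρ => by
    obtain ⟨k, hk⟩ := exists_pow_lt_of_lt_one (div_pos he ht) hr1
    exact descend k x hx t ht htρ ((lt_div_iff₀ ht).1 hk).le
  exact densityh_le_of_forall_lt hd fun t ht =>
    strict t ht.1 (hdρ.trans_lt' (mul_lt_mul_of_pos_left ht.2 hr0))

end Density

theorem sup_density_independent_of_bound_general
{n N : ℕ}
    (f : Fin N → EuclideanSpace ℝ (Fin n) → EuclideanSpace ℝ (Fin n))
    (rr : Fin N → ℝ) (hr : ∀ i, 0 < rr i ∧ rr i < 1)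
    (hsim : ∀ i x y, dist (f i x) (f i y) = rr i * dist x y)
    (E : Set (EuclideanSpace ℝ (Fin n))) (hEne : E.Nonempty) (hEcp : IsCompact E)
    (hEinv : E = ⋃ i, f i '' E)
(rmin : ℝ) (hrmin : IsLeast (Set.range rr) rmin)
(c : ℝ)
    (hcdef : c = sInf {d : ℝ | ∃ i j : Fin N, i ≠ j ∧
      ∃ u ∈ f i '' E, ∃ v ∈ f j '' E, d = dist u v})
(s : ℝ) (hsum : ∑ i, rr i ^ s = 1)
    (μ : MeasureTheory.Measure (EuclideanSpace ℝ (Fin n))) (hμ : IsProbabilityMeasure μ)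
    (hμss : ∀ A : Set (EuclideanSpace ℝ (Fin n)), MeasurableSet A →
      μ A = ∑ i, ENNReal.ofReal (rr i ^ s) * μ (f i ⁻¹' A))
    (a b : ℝ) (ha : 0 < a) (ha' : a ≤ c / rmin) (hb : 0 < b) (hb' : b ≤ c / rmin) :
    sSup {v : ℝ≥0∞ | ∃ x ∈ E, ∃ d : ℝ, 0 < d ∧ d ≤ a ∧ v = densityh μ s x d} =
      sSup {v : ℝ≥0∞ | ∃ x ∈ E, ∃ d : ℝ, 0 < d ∧ d ≤ b ∧ v = densityh μ s x d} := by
  obtain ⟨⟨i₀, rfl⟩, -⟩ := hrmin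
  have : Nonempty (Fin N) := ⟨i₀⟩
  obtain ⟨imax, hmax⟩ := Finite.exists_max rr
  have hmaps : ∀ i, MapsTo (f i) E E := fun i x hx => by
    rw [hEinv]; exact mem_iUnion_of_mem i (mem_image_of_mem _ hx)
  have hsep : ∀ i j, i ≠ j → ∀ u ∈ E, ∀ v ∈ E, c ≤ dist (f i u) (f j v) :=
    fun i j hij u hu v hv => hcdef ▸
      csInf_le ⟨0, by rintro _ ⟨-, -, -, -, -, -, -, rfl⟩; positivity⟩
        ⟨i, j, hij, _, mem_image_of_mem _ hu, _, mem_image_of_mem _ hv, rfl⟩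
  have hweights : ∑ i, ENNReal.ofReal (rr i ^ s) = 1 := by
    rw [← ENNReal.ofReal_sum_of_nonneg fun i _ => (Real.rpow_pos_of_pos (hr i).1 s).le, hsum,
      ENNReal.ofReal_one]
  have hlip : ∀ i, LipschitzWith ⟨rr imax, (hr imax).1.le⟩ (f i) := fun i =>
    LipschitzWith.of_dist_le_mul fun x y => (hsim i x y).trans_le (by gcongr; exact hmax i)
  have hEc : μ Eᶜ = 0 := measure_compl_eq_zero_of_selfSimilar hμss hweights
    (show rr imax < 1 from (hr imax).2) hlip hmaps hEcp.isClosed hEne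
  have key : ∀ e, 0 < e → ∀ x ∈ E, ∀ d, 0 < d → d ≤ c / rr i₀ →
      densityh μ s x d ≤ sSup {v | ∃ x ∈ E, ∃ d : ℝ, 0 < d ∧ d ≤ e ∧ v = densityh μ s x d} := by
    intro e he x hx d hd hdc
    refine densityh_le_of_scaling (hmaps i₀) (hr i₀).1 (hr i₀).2 he ?_ ?_ hx hd
      ((le_div_iff₀' (hr i₀).1).1 hdc)
    · exact fun x hx d hd hdc => densityh_mul_eq (hr i₀).1 hd.le <| measure_closedBall_image_eq
        hμss hEc (hr i₀).1 (hsim i₀) (fun j hj => hsep j i₀ hj) hx hdc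
    · exact fun x hx d hd hde => le_sSup ⟨x, hx, d, hd, hde, rfl⟩
  refine le_antisymm (sSup_le ?_) (sSup_le ?_) <;> rintro _ ⟨x, hx, d, hd, hde, rfl⟩
  exacts [key b hb x hx d hd (hde.trans ha'), key a ha x hx d hd (hde.trans hb')]

theorem sup_density_independent_of_bound
{n N : ℕ} (hN : 2 ≤ N)
    (f : Fin N → EuclideanSpace ℝ (Fin n) → EuclideanSpace ℝ (Fin n))
    (rr : Fin N → ℝ) (hr : ∀ i, 0 < rr i ∧ rr i < 1)
    (hsim : ∀ i x y, dist (f i x) (f i y) = rr i * dist x y)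
    (E : Set (EuclideanSpace ℝ (Fin n))) (hEne : E.Nonempty) (hEcp : IsCompact E)
    (hEinv : E = ⋃ i, f i '' E)
    (hssc : ∀ i j, i ≠ j → Disjoint (f i '' E) (f j '' E))
(hEdiam : Metric.diam E = 1)
(rmin : ℝ) (hrmin : IsLeast (Set.range rr) rmin)
(c : ℝ) (hc : 0 < c)
    (hcdef : c = sInf {d : ℝ | ∃ i j : Fin N, i ≠ j ∧
      ∃ u ∈ f i '' E, ∃ v ∈ f j '' E, d = dist u v})
(s : ℝ) (hs : 0 < s) (hsum : ∑ i, rr i ^ s = 1)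
    (μ : MeasureTheory.Measure (EuclideanSpace ℝ (Fin n))) (hμ : IsProbabilityMeasure μ)
    (hμss : ∀ A : Set (EuclideanSpace ℝ (Fin n)), MeasurableSet A →
      μ A = ∑ i, ENNReal.ofReal (rr i ^ s) * μ (f i ⁻¹' A))
    (a b : ℝ) (ha : 0 < a) (ha' : a ≤ c / rmin) (hb : 0 < b) (hb' : b ≤ c / rmin) :
    sSup {v : ℝ≥0∞ | ∃ x ∈ E, ∃ d : ℝ, 0 < d ∧ d ≤ a ∧ v = densityh μ s x d} =
      sSup {v : ℝ≥0∞ | ∃ x ∈ E, ∃ d : ℝ, 0 < d ∧ d ≤ b ∧ v = densityh μ s x d} :=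
  sup_density_independent_of_bound_general f rr hr hsim E hEne hEcp hEinv rmin hrmin c hcdef s hsum
    μ hμ hμss a b ha ha' hb hb'
end

section
/- Let r and t be real numbers with 0 < r ≤ 1/3 and 0 < t ≤ 1/3, and let s ∈ (0, 1]. Then (1 + t/(1−r))^s ≤ 1 + 2·t^s. -/
open Metric Set MeasureTheory Filter Topology
open scoped ENNReal NNReal

/-! For `0 < s ≤ 1`, `x ↦ x ^ s` is subadditive, and the contraction factor `1 / (1 - r) ≤ 2`
is absorbed by `(2 t) ^ s ≤ 2 t ^ s`. -/

lemma rpow_mul_le_mul_rpow_of_one_le {c t s : ℝ} (hc : 1 ≤ c) (ht : 0 ≤ t) (hs : s ≤ 1) :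
    (c * t) ^ s ≤ c * t ^ s := by
  rw [Real.mul_rpow (zero_le_one.trans hc) ht]
  exact mul_le_mul_of_nonneg_right (Real.rpow_le_self_of_one_le hc hs) (Real.rpow_nonneg ht s)

theorem key_rpow_inequality_general (r t s : ℝ)
    (hr : r ≤ 1/3) (ht0 : 0 < t)
    (hs0 : 0 < s) (hs1 : s ≤ 1) :
    (1 + t / (1 - r)) ^ s ≤ 1 + 2 * t ^ s := by
  have h1r : 0 < 1 - r := by linarith
  have hu : 0 ≤ t / (1 - r) := (div_pos ht0 h1r).le
  have hu_le : t / (1 - r) ≤ 2 * t := by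
    rw [div_le_iff₀ h1r]
    nlinarith
  calc (1 + t / (1 - r)) ^ s ≤ 1 ^ s + (t / (1 - r)) ^ s :=
        Real.rpow_add_le_add_rpow zero_le_one hu hs0.le hs1
    _ ≤ 1 + (2 * t) ^ s := by
        rw [Real.one_rpow]
        gcongr
    _ ≤ 1 + 2 * t ^ s := by
        gcongr
        exact rpow_mul_le_mul_rpow_of_one_le one_le_two ht0.le hs1

theorem key_rpow_inequality (r t s : ℝ)
    (hr0 : 0 < r) (hr : r ≤ 1/3) (ht0 : 0 < t) (ht : t ≤ 1/3)
    (hs0 : 0 < s) (hs1 : s ≤ 1) :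
    (1 + t / (1 - r)) ^ s ≤ 1 + 2 * t ^ s :=
  key_rpow_inequality_general r t s hr ht0 hs0 hs1
end

section
/- Let r ∈ (0, 1/3]. For every x ∈ f_1(S_r) and every d with 1−2r ≤ d ≤ (1−2r)/r, one has B((0,0), d) ∩ S_r ⊆ B(x, d) ∩ S_r, where B denotes the closed Euclidean ball in ℝ²; consequently μ(B((0,0),d)) ≤ μ(B(x,d)) for every Borel probability measure μ supported on S_r. -/
open Metric Set MeasureTheory Filter Topology
open scoped ENNReal NNReal

/-! The three similitudes map both the sector `0 ≤ v₁ ≤ √3 v₀` of opening angle `π/3` and the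
closed unit ball into themselves, so the gasket lies in their intersection: a compact set covered
by its images under contractions lies in every closed set they preserve (maximise the distance to
that set). Two vectors `y, z` of the sector satisfy `‖y‖‖z‖ ≤ 2⟪y, z⟫`, hence
`‖y - r z‖ ≤ ‖y‖` whenever `r‖z‖ ≤ ‖y‖`.

Let `x = r z` and `y ∈ S` with `‖y‖ ≤ d`. If `y = r w` lies in the first cylinder, then
`‖y - x‖ = r‖w - z‖ ≤ r ≤ 1 - 2r ≤ d`. Otherwise `y` lies in one of the other two cylinders, so
`‖y‖ ≥ (1 - r) - r ≥ r ≥ r‖z‖` and `‖y - x‖ ≤ ‖y‖ ≤ d`. -/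

local notation "ℝ²" => EuclideanSpace ℝ (Fin 2)

theorem IsCompact.subset_of_subset_iUnion_image_of_mapsTo {X ι : Type*} [PseudoMetricSpace X]
    [ProperSpace X] {S K : Set X} (hS : IsCompact S) (hK : IsClosed K) (hKne : K.Nonempty)
    {f : ι → X → X} {L : ℝ≥0} (hL : L < 1) (hf : ∀ i, LipschitzWith L (f i))
    (hSf : S ⊆ ⋃ i, f i '' S) (hKf : ∀ i, MapsTo (f i) K K) : S ⊆ K := by
  have hstep : ∀ v ∈ S, ∃ w ∈ S, infDist v K ≤ L * infDist w K := by
    intro v hv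
    obtain ⟨i, w, hw, rfl⟩ : ∃ i, ∃ w ∈ S, f i w = v := by simpa using hSf hv
    obtain ⟨k, hk, hwk⟩ := hK.exists_infDist_eq_dist hKne w
    refine ⟨w, hw, ?_⟩
    calc infDist (f i w) K ≤ dist (f i w) (f i k) := infDist_le_dist_of_mem (hKf i hk)
      _ ≤ L * dist w k := (hf i).dist_le_mul w k
      _ = L * infDist w K := by rw [hwk]
  intro v hv
  obtain ⟨v₀, hv₀, hmax⟩ := hS.exists_isMaxOn ⟨v, hv⟩ (continuous_infDist_pt K).continuousOn
  obtain ⟨w, hw, hle⟩ := hstep v₀ hv₀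
  have hL' : (L : ℝ) < 1 := mod_cast hL
  have hv₀K : infDist v₀ K ≤ 0 := by
    nlinarith [isMaxOn_iff.mp hmax w hw, infDist_nonneg (x := w) (s := K), L.coe_nonneg]
  rw [hK.mem_iff_infDist_zero hKne]
  exact le_antisymm ((isMaxOn_iff.mp hmax v hv).trans hv₀K) infDist_nonneg

theorem norm_sub_smul_le_norm {F : Type*} [NormedAddCommGroup F] [InnerProductSpace ℝ F]
    {y z : F} {r : ℝ} (hr : 0 ≤ r) (hyz : ‖y‖ * ‖z‖ ≤ 2 * inner ℝ y z)
    (hzy : r * ‖z‖ ≤ ‖y‖) : ‖y - r • z‖ ≤ ‖y‖ := by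
  have hsq : ‖y - r • z‖ ^ 2 ≤ ‖y‖ ^ 2 :=
    calc ‖y - r • z‖ ^ 2 = ‖y‖ ^ 2 - r * (2 * inner ℝ y z) + (r * ‖z‖) ^ 2 := by
          rw [norm_sub_sq_real, inner_smul_right, norm_smul, Real.norm_of_nonneg hr]; ring
      _ ≤ ‖y‖ ^ 2 - r * ‖z‖ * (‖y‖ - r * ‖z‖) := by nlinarith
      _ ≤ ‖y‖ ^ 2 := by
          have := mul_nonneg (mul_nonneg hr (norm_nonneg z)) (sub_nonneg.2 hzy)
          linarith
  exact (pow_le_pow_iff_left₀ (norm_nonneg _) (norm_nonneg _) two_ne_zero).mp hsq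

def sector : Set ℝ² := {v | 0 ≤ v 1 ∧ v 1 ≤ √3 * v 0}

theorem isClosed_sector : IsClosed sector := by
  have hcoord : ∀ i, Continuous fun v : ℝ² => v i := fun i => (EuclideanSpace.proj i).continuous
  exact (isClosed_le continuous_const (hcoord 1)).inter
    (isClosed_le (hcoord 1) (continuous_const.mul (hcoord 0)))

theorem smul_add_mem_sector {r : ℝ} {v t : ℝ²} (hr : 0 ≤ r) (hv : v ∈ sector)
    (ht : t ∈ sector) : r • v + t ∈ sector := by
  obtain ⟨hv₁, hv₂⟩ := hv
  obtain ⟨ht₁, ht₂⟩ := ht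
  simp only [sector, mem_ofPred_eq, PiLp.add_apply, PiLp.smul_apply, smul_eq_mul]
  constructor <;> nlinarith

theorem EuclideanSpace.norm_eq_sqrt_sq_add_sq (v : ℝ²) : ‖v‖ = √(v 0 ^ 2 + v 1 ^ 2) := by
  simp [EuclideanSpace.norm_eq, Fin.sum_univ_two]

theorem norm_mul_norm_le_two_mul_inner_of_mem_sector {y z : ℝ²} (hy : y ∈ sector)
    (hz : z ∈ sector) : ‖y‖ * ‖z‖ ≤ 2 * inner ℝ y z := by
  obtain ⟨hy₁, hy₂⟩ := hy
  obtain ⟨hz₁, hz₂⟩ := hz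
  have h3 : √3 ^ 2 = 3 := Real.sq_sqrt (by norm_num)
  have hinner : inner ℝ y z = y 0 * z 0 + y 1 * z 1 := by
    simp [PiLp.inner_apply, Fin.sum_univ_two, mul_comm]
  have hy₀ : 0 ≤ y 0 := by nlinarith [Real.sqrt_nonneg 3]
  have hz₀ : 0 ≤ z 0 := by nlinarith [Real.sqrt_nonneg 3]
  -- the angle between `y` and `z` is at most `π/3`, so `|sin| ≤ √3 cos`
  have hcross : (y 0 * z 1 - y 1 * z 0) ^ 2 ≤ 3 * (y 0 * z 0 + y 1 * z 1) ^ 2 := by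
    have hupper : y 0 * z 1 - y 1 * z 0 ≤ √3 * (y 0 * z 0) := by
      nlinarith [mul_nonneg hy₁ hz₀, mul_le_mul_of_nonneg_left hz₂ hy₀]
    have hlower : -(√3 * (y 0 * z 0)) ≤ y 0 * z 1 - y 1 * z 0 := by
      nlinarith [mul_nonneg hy₀ hz₁, mul_le_mul_of_nonneg_right hy₂ hz₀]
    calc (y 0 * z 1 - y 1 * z 0) ^ 2 ≤ (√3 * (y 0 * z 0)) ^ 2 := sq_le_sq' hlower hupper
      _ = 3 * (y 0 * z 0) ^ 2 := by rw [mul_pow, h3]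
      _ ≤ 3 * (y 0 * z 0 + y 1 * z 1) ^ 2 := by
          have := mul_nonneg hy₀ hz₀
          gcongr
          exact le_add_of_nonneg_right (mul_nonneg hy₁ hz₁)
  rw [EuclideanSpace.norm_eq_sqrt_sq_add_sq, EuclideanSpace.norm_eq_sqrt_sq_add_sq, hinner,
    ← Real.sqrt_mul (by positivity)]
  refine Real.sqrt_le_iff.mpr ⟨by positivity, ?_⟩
  nlinarith

theorem norm_sub_le_max_of_mem_sector {y z : ℝ²} (hy : y ∈ sector) (hz : z ∈ sector) :
    ‖y - z‖ ≤ max ‖y‖ ‖z‖ := by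
  rcases le_total ‖z‖ ‖y‖ with hzy | hyz
  · simpa using (norm_sub_smul_le_norm zero_le_one
      (norm_mul_norm_le_two_mul_inner_of_mem_sector hy hz) (by simpa using hzy)).trans
      (le_max_left _ _)
  · rw [← norm_neg, neg_sub]
    simpa using (norm_sub_smul_le_norm zero_le_one
      (norm_mul_norm_le_two_mul_inner_of_mem_sector hz hy) (by simpa using hyz)).trans
      (le_max_right _ _)

/-- The translation parts of the three similitudes, with `f_{i+1} v = r • v + gasketShift r i`. -/
noncomputable def gasketShift (r : ℝ) : Fin 3 → ℝ² :=
  ![0, (WithLp.equiv 2 (Fin 2 → ℝ)).symm ![1 - r, 0],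
    (1 - r) • (WithLp.equiv 2 (Fin 2 → ℝ)).symm ![1/2, Real.sqrt 3 / 2]]

section Gasket

variable {r : ℝ} {S : Set ℝ²}

theorem gasketShift_mem_sector (hr : r ≤ 1) (i : Fin 3) : gasketShift r i ∈ sector := by
  fin_cases i
  · simp [gasketShift, sector]
  · simpa [gasketShift, sector] using hr
  · simpa [gasketShift, sector] using ⟨hr, le_of_eq (by ring)⟩

theorem norm_gasketShift (hr : r ≤ 1) {i : Fin 3} (hi : i ≠ 0) :
    ‖gasketShift r i‖ = 1 - r := by
  have h3 : √3 ^ 2 = 3 := Real.sq_sqrt (by norm_num)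
  rw [EuclideanSpace.norm_eq_sqrt_sq_add_sq, Real.sqrt_eq_iff_eq_sq (by positivity) (by linarith)]
  fin_cases i
  · exact absurd rfl hi
  · simp [gasketShift]
  · simp [gasketShift]
    linear_combination (1 - r) ^ 2 / 4 * h3

theorem norm_gasketShift_le (hr : r ≤ 1) (i : Fin 3) : ‖gasketShift r i‖ ≤ 1 - r := by
  rcases eq_or_ne i 0 with rfl | hi
  · simpa [gasketShift] using hr
  · exact (norm_gasketShift hr hi).le

theorem subset_iUnion_gasketShift
    (hinv : S = (fun v => r • v) '' S ∪
        (fun v => r • v + (WithLp.equiv 2 (Fin 2 → ℝ)).symm ![1 - r, 0]) '' S ∪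
        (fun v => r • v +
          (1 - r) • (WithLp.equiv 2 (Fin 2 → ℝ)).symm ![1/2, Real.sqrt 3 / 2]) '' S) :
    S ⊆ ⋃ i, (fun v => r • v + gasketShift r i) '' S := by
  intro v hv
  rw [hinv] at hv
  simp only [mem_iUnion, Fin.exists_fin_succ, Fin.exists_fin_zero]
  rcases hv with (hv | hv) | hv
  · exact Or.inl (by simpa [gasketShift] using hv)
  · exact Or.inr (Or.inl (by simpa [gasketShift] using hv))
  · exact Or.inr (Or.inr (Or.inl (by simpa [gasketShift] using hv)))

theorem subset_sector_inter_closedBall (hr0 : 0 ≤ r) (hr1 : r < 1) (hS : IsCompact S)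
    (hSf : S ⊆ ⋃ i, (fun v => r • v + gasketShift r i) '' S) :
    S ⊆ sector ∩ closedBall 0 1 := by
  have hL : ‖r‖₊ < 1 := by
    rw [← NNReal.coe_lt_coe, coe_nnnorm, Real.norm_of_nonneg hr0]
    exact_mod_cast hr1
  have hlip : ∀ i, LipschitzWith ‖r‖₊ fun v => r • v + gasketShift r i := fun i =>
    LipschitzWith.of_dist_le_mul fun v w => by simp [dist_eq_norm, ← smul_sub, norm_smul]
  have hmaps : ∀ i, MapsTo (fun v => r • v + gasketShift r i) (sector ∩ closedBall 0 1)
      (sector ∩ closedBall 0 1) := by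
    rintro i v ⟨hv, hv1⟩
    refine ⟨smul_add_mem_sector hr0 hv (gasketShift_mem_sector hr1.le i), ?_⟩
    rw [mem_closedBall_zero_iff] at hv1 ⊢
    calc ‖r • v + gasketShift r i‖ ≤ r * ‖v‖ + ‖gasketShift r i‖ := by
          simpa [norm_smul, abs_of_nonneg hr0] using norm_add_le (r • v) (gasketShift r i)
      _ ≤ r * 1 + (1 - r) := by
          gcongr
          exact norm_gasketShift_le hr1.le i
      _ = 1 := by ring
  exact hS.subset_of_subset_iUnion_image_of_mapsTo (isClosed_sector.inter isClosed_closedBall)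
    ⟨0, ⟨le_rfl, by simp⟩, by simp⟩ hL hlip hSf hmaps

theorem closedBall_zero_inter_subset_closedBall_smul (hr0 : 0 ≤ r) (hr : r ≤ 1/3)
    (hS : S ⊆ sector ∩ closedBall 0 1) (hSf : S ⊆ ⋃ i, (fun v => r • v + gasketShift r i) '' S)
    {z : ℝ²} (hz : z ∈ S) {d : ℝ} (hd : 1 - 2 * r ≤ d) :
    closedBall 0 d ∩ S ⊆ closedBall (r • z) d := by
  have hball : ∀ {v}, v ∈ S → v ∈ sector ∧ ‖v‖ ≤ 1 := fun hv => by
    simpa only [mem_inter_iff, mem_closedBall_zero_iff] using hS hv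
  obtain ⟨hz_sec, hz1⟩ := hball hz
  rintro y ⟨hyd, hy⟩
  rw [mem_closedBall_zero_iff] at hyd
  rw [mem_closedBall, dist_eq_norm]
  have hy_sec := (hball hy).1
  obtain ⟨i, w, hw, rfl⟩ : ∃ i, ∃ w ∈ S, r • w + gasketShift r i = y := by simpa using hSf hy
  obtain ⟨hw_sec, hw1⟩ := hball hw
  rcases eq_or_ne i 0 with rfl | hi
  · calc ‖r • w + gasketShift r 0 - r • z‖ = r * ‖w - z‖ := by
          simp [gasketShift, ← smul_sub, norm_smul, abs_of_nonneg hr0]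
      _ ≤ r * 1 := by
          gcongr
          exact (norm_sub_le_max_of_mem_sector hw_sec hz_sec).trans (max_le hw1 hz1)
      _ ≤ d := by linarith
  · have hy_far : 1 - 2 * r ≤ ‖r • w + gasketShift r i‖ := by
      have := norm_sub_norm_le (gasketShift r i) (-(r • w))
      rw [norm_gasketShift (by linarith) hi, norm_neg, norm_smul, Real.norm_of_nonneg hr0,
        sub_neg_eq_add, add_comm] at this
      nlinarith
    refine (norm_sub_smul_le_norm hr0
      (norm_mul_norm_le_two_mul_inner_of_mem_sector hy_sec hz_sec) ?_).trans hyd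
    nlinarith

end Gasket

theorem ball_at_origin_minimizes_mass_general
(r : ℝ) (hr0 : 0 < r) (hr : r ≤ 1/3)
    (S : Set (EuclideanSpace ℝ (Fin 2))) (hScp : IsCompact S)
    (hinv : S = (fun v => r • v) '' S ∪
        (fun v => r • v + (WithLp.equiv 2 (Fin 2 → ℝ)).symm ![1 - r, 0]) '' S ∪
        (fun v => r • v +
          (1 - r) • (WithLp.equiv 2 (Fin 2 → ℝ)).symm ![1/2, Real.sqrt 3 / 2]) '' S)
    (x : EuclideanSpace ℝ (Fin 2)) (hx : x ∈ (fun v => r • v) '' S)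
    (d : ℝ) (hd1 : 1 - 2 * r ≤ d) :
    Metric.closedBall (0 : EuclideanSpace ℝ (Fin 2)) d ∩ S ⊆ Metric.closedBall x d ∩ S ∧
    ∀ μ : MeasureTheory.Measure (EuclideanSpace ℝ (Fin 2)),
      IsProbabilityMeasure μ → μ Sᶜ = 0 →
      μ (Metric.closedBall (0 : EuclideanSpace ℝ (Fin 2)) d) ≤ μ (Metric.closedBall x d) := by
  obtain ⟨z, hz, rfl⟩ := hx
  have hSf := subset_iUnion_gasketShift hinv
  have hS := subset_sector_inter_closedBall hr0.le (by linarith) hScp hSf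
  have hsub : closedBall 0 d ∩ S ⊆ closedBall (r • z) d :=
    closedBall_zero_inter_subset_closedBall_smul hr0.le hr hS hSf hz hd1
  refine ⟨subset_inter hsub inter_subset_right, fun μ _ hμS => ?_⟩
  calc μ (closedBall 0 d) = μ (closedBall 0 d ∩ S) := (measure_inter_conull hμS).symm
    _ ≤ μ (closedBall (r • z) d) := measure_mono hsub

theorem ball_at_origin_minimizes_mass
(r : ℝ) (hr0 : 0 < r) (hr : r ≤ 1/3)
    (S : Set (EuclideanSpace ℝ (Fin 2))) (hSne : S.Nonempty) (hScp : IsCompact S)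
    (hinv : S = (fun v => r • v) '' S ∪
        (fun v => r • v + (WithLp.equiv 2 (Fin 2 → ℝ)).symm ![1 - r, 0]) '' S ∪
        (fun v => r • v +
          (1 - r) • (WithLp.equiv 2 (Fin 2 → ℝ)).symm ![1/2, Real.sqrt 3 / 2]) '' S)
    (x : EuclideanSpace ℝ (Fin 2)) (hx : x ∈ (fun v => r • v) '' S)
    (d : ℝ) (hd1 : 1 - 2 * r ≤ d) (hd2 : d ≤ (1 - 2 * r) / r) :
    Metric.closedBall (0 : EuclideanSpace ℝ (Fin 2)) d ∩ S ⊆ Metric.closedBall x d ∩ S ∧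
    ∀ μ : MeasureTheory.Measure (EuclideanSpace ℝ (Fin 2)),
      IsProbabilityMeasure μ → μ Sᶜ = 0 →
      μ (Metric.closedBall (0 : EuclideanSpace ℝ (Fin 2)) d) ≤ μ (Metric.closedBall x d) :=
  ball_at_origin_minimizes_mass_general r hr0 hr S hScp hinv x hx d hd1
end

section
/- Let r ∈ (0, 1/3]. For every i ∈ {2, 3}, every y ∈ f_i(S_r) and every x ∈ f_1(S_r), one has dist(x, y) ≤ dist((0,0), y); that is, the maximum over x ∈ f_1(S_r) of dist(x, y) is attained at x = (0,0). -/
open Metric Set MeasureTheory Filter Topology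
open scoped ENNReal NNReal

open scoped RealInnerProductSpace

/-!
Every map of the system has the form `v ↦ r • v + (1 - r) • q` with `q` a vertex of the closed
triangle `T` with vertices `0`, `e₁ = (1, 0)`, `p = (1/2, √3/2)`, so it maps the convex set `T`
into itself, and the attractor lies in `T`. For `x = r • v` and `y = r • w + (1 - r) • e`
(`v, w ∈ T`, `e ∈ {e₁, p}`), `dist x y ≤ dist 0 y` means `‖x‖² ≤ 2 ⟪x, y⟫`. Since the triangle
is equilateral, `T` lies in the closed unit disc about `e`, i.e. `‖v‖² ≤ 2 ⟪v, e⟫`, and inner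
products of points of `T` are nonnegative; so
`2 ⟪x, y⟫ ≥ 2 r (1 - r) ⟪v, e⟫ ≥ r (1 - r) ‖v‖² ≥ r² ‖v‖²` as soon as `r ≤ 1/2`.
-/

theorem subset_of_mapsTo_of_lipschitzWith {X ι : Type*} [MetricSpace X] [ProperSpace X]
    {f : ι → X → X} {k : ℝ≥0} (hk : k < 1) (hf : ∀ i, LipschitzWith k (f i))
    {K S : Set X} (hK : IsClosed K) (hKne : K.Nonempty) (hKf : ∀ i, MapsTo (f i) K K)
    (hS : IsCompact S) (hSf : S ⊆ ⋃ i, f i '' S) : S ⊆ K := by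
  rcases S.eq_empty_or_nonempty with rfl | hSne
  · exact empty_subset K
  obtain ⟨x₀, hx₀, hmax⟩ := hS.exists_isMaxOn hSne (continuous_infDist_pt K).continuousOn
  obtain ⟨i, v, hv, rfl⟩ : ∃ i, ∃ v ∈ S, f i v = x₀ := by simpa using hSf hx₀
  obtain ⟨y, hy, hvy⟩ := hK.exists_infDist_eq_dist hKne v
  have hcontract : infDist (f i v) K ≤ k * infDist v K :=
    calc infDist (f i v) K ≤ dist (f i v) (f i y) := infDist_le_dist_of_mem (hKf i hy)
      _ ≤ k * dist v y := (hf i).dist_le_mul v y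
      _ = k * infDist v K := by rw [hvy]
  have hzero : infDist (f i v) K ≤ 0 := by
    have hle : infDist v K ≤ infDist (f i v) K := hmax hv
    have hk' : (k : ℝ) < 1 := hk
    nlinarith [infDist_nonneg (x := v) (s := K)]
  intro x hx
  exact (hK.mem_iff_infDist_zero hKne).2 (le_antisymm ((hmax hx).trans hzero) infDist_nonneg)

section InnerProductSpace

variable {E : Type*} [NormedAddCommGroup E] [InnerProductSpace ℝ E]

theorem dist_le_dist_zero_iff (x y : E) : dist x y ≤ dist 0 y ↔ ‖x‖ ^ 2 ≤ 2 * ⟪x, y⟫ := by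
  rw [dist_eq_norm, dist_zero_left, ← sq_le_sq₀ (norm_nonneg _) (norm_nonneg _),
    norm_sub_sq_real]
  constructor <;> intro h <;> linarith

theorem dist_smul_le_dist_zero {v w e : E} {r : ℝ} (hr0 : 0 ≤ r) (hr : r ≤ 1 / 2)
    (hv : v ∈ closedBall e ‖e‖) (hvw : 0 ≤ ⟪v, w⟫) :
    dist (r • v) (r • w + (1 - r) • e) ≤ dist 0 (r • w + (1 - r) • e) := by
  have hve : ‖v‖ ^ 2 ≤ 2 * ⟪v, e⟫ := by
    refine (dist_le_dist_zero_iff v e).1 ?_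
    rwa [dist_zero_left, ← mem_closedBall]
  rw [dist_le_dist_zero_iff, norm_smul, Real.norm_of_nonneg hr0, inner_add_right,
    real_inner_smul_left, real_inner_smul_left, real_inner_smul_right, real_inner_smul_right]
  nlinarith [mul_nonneg (mul_nonneg hr0 hr0) hvw, mul_nonneg hr0 (sq_nonneg ‖v‖),
    mul_le_mul_of_nonneg_left hve (mul_nonneg hr0 (by linarith : (0 : ℝ) ≤ 1 - r))]

theorem inner_nonneg_of_mem_convexHull {s : Set E} (hs : ∀ u ∈ s, ∀ v ∈ s, 0 ≤ ⟪u, v⟫) :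
    ∀ u ∈ convexHull ℝ s, ∀ v ∈ convexHull ℝ s, 0 ≤ ⟪u, v⟫ := by
  have hull {t : Set E} (ht : ∀ u ∈ t, ∀ v ∈ s, 0 ≤ ⟪u, v⟫) :
      ∀ u ∈ t, ∀ v ∈ convexHull ℝ s, 0 ≤ ⟪u, v⟫ := fun u hu =>
    convexHull_min (ht u hu) (convex_halfSpace_ge (innerₛₗ ℝ u).isLinear 0)
  refine hull fun u hu v hv => ?_
  rw [real_inner_comm]
  exact hull hs v hv u hu

end InnerProductSpace

theorem Convex.mapsTo_smul_add_smul {E : Type*} [AddCommGroup E] [Module ℝ E] {T : Set E}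
    (hT : Convex ℝ T) {q : E} (hq : q ∈ T) {r : ℝ} (hr0 : 0 ≤ r) (hr1 : r ≤ 1) :
    MapsTo (fun v => r • v + (1 - r) • q) T T := fun _ hv =>
  hT hv hq hr0 (sub_nonneg.2 hr1) (add_sub_cancel r 1)

namespace SierpinskiGasket

def vertexRight : EuclideanSpace ℝ (Fin 2) := !₂[1, 0]

noncomputable def vertexTop : EuclideanSpace ℝ (Fin 2) := !₂[1 / 2, √3 / 2]

def triangle : Set (EuclideanSpace ℝ (Fin 2)) := convexHull ℝ {0, vertexRight, vertexTop}

theorem norm_vertexRight : ‖vertexRight‖ = 1 := by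
  simp [vertexRight, EuclideanSpace.norm_eq, Fin.sum_univ_two]

theorem norm_vertexTop : ‖vertexTop‖ = 1 := by
  simp [vertexTop, EuclideanSpace.norm_eq, Fin.sum_univ_two, div_pow]
  norm_num

theorem dist_vertexRight_vertexTop : dist vertexRight vertexTop = 1 := by
  simp [vertexRight, vertexTop, EuclideanSpace.dist_eq, Fin.sum_univ_two, Real.dist_eq, div_pow]
  norm_num

theorem isClosed_triangle : IsClosed triangle :=
  ((toFinite _).isCompact_convexHull ℝ).isClosed

theorem zero_mem_triangle : (0 : EuclideanSpace ℝ (Fin 2)) ∈ triangle :=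
  subset_convexHull ℝ _ (mem_insert _ _)

theorem vertexRight_mem_triangle : vertexRight ∈ triangle :=
  subset_convexHull ℝ _ (mem_insert_of_mem _ (mem_insert _ _))

theorem vertexTop_mem_triangle : vertexTop ∈ triangle :=
  subset_convexHull ℝ _ (mem_insert_of_mem _ (mem_insert_of_mem _ rfl))

theorem inner_nonneg_of_mem_triangle {u v : EuclideanSpace ℝ (Fin 2)} (hu : u ∈ triangle)
    (hv : v ∈ triangle) : 0 ≤ ⟪u, v⟫ := by
  refine inner_nonneg_of_mem_convexHull ?_ u hu v hv
  simp only [mem_insert_iff, mem_singleton_iff]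
  rintro u (rfl | rfl | rfl) v (rfl | rfl | rfl) <;>
    simp [vertexRight, vertexTop, PiLp.inner_apply, Fin.sum_univ_two]

theorem triangle_subset_closedBall {e : EuclideanSpace ℝ (Fin 2)}
    (he : e = vertexRight ∨ e = vertexTop) : triangle ⊆ closedBall e ‖e‖ := by
  refine convexHull_min ?_ (convex_closedBall e ‖e‖)
  have hdist := dist_vertexRight_vertexTop
  rcases he with rfl | rfl <;>
    simp [insert_subset_iff, norm_vertexRight, norm_vertexTop, dist_comm, hdist]

theorem subset_triangle {r : ℝ} (hr0 : 0 ≤ r) (hr1 : r < 1) {S : Set (EuclideanSpace ℝ (Fin 2))}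
    (hS : IsCompact S)
    (hSf : S ⊆ (r • ·) '' S ∪ (fun v => r • v + (1 - r) • vertexRight) '' S ∪
        (fun v => r • v + (1 - r) • vertexTop) '' S) :
    S ⊆ triangle := by
  let f : triangle → EuclideanSpace ℝ (Fin 2) → EuclideanSpace ℝ (Fin 2) :=
    fun q v => r • v + (1 - r) • (q : EuclideanSpace ℝ (Fin 2))
  have hf : ∀ q, LipschitzWith ‖r‖₊ (f q) := fun q =>
    LipschitzWith.of_dist_le_mul fun v w => by simp [f, dist_smul₀]
  refine subset_of_mapsTo_of_lipschitzWith (f := f) ?_ hf isClosed_triangle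
    ⟨0, zero_mem_triangle⟩
    (fun q => (convex_convexHull ℝ _).mapsTo_smul_add_smul q.2 hr0 hr1.le) hS ?_
  · rw [← NNReal.coe_lt_coe, coe_nnnorm, Real.norm_of_nonneg hr0]
    exact hr1
  · refine hSf.trans (union_subset (union_subset ?_ ?_) ?_) <;> rintro _ ⟨v, hv, rfl⟩
    · exact mem_iUnion.2 ⟨⟨0, zero_mem_triangle⟩, v, hv, by simp [f]⟩
    · exact mem_iUnion.2 ⟨⟨vertexRight, vertexRight_mem_triangle⟩, v, hv, rfl⟩
    · exact mem_iUnion.2 ⟨⟨vertexTop, vertexTop_mem_triangle⟩, v, hv, rfl⟩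

end SierpinskiGasket

open SierpinskiGasket in
theorem dist_to_other_pieces_maximized_at_origin_general
(r : ℝ) (hr0 : 0 < r) (hr : r ≤ 1/3)
    (S : Set (EuclideanSpace ℝ (Fin 2))) (hScp : IsCompact S)
    (hinv : S = (fun v => r • v) '' S ∪
        (fun v => r • v + (WithLp.equiv 2 (Fin 2 → ℝ)).symm ![1 - r, 0]) '' S ∪
        (fun v => r • v +
          (1 - r) • (WithLp.equiv 2 (Fin 2 → ℝ)).symm ![1/2, Real.sqrt 3 / 2]) '' S)
    :
    ∀ y : EuclideanSpace ℝ (Fin 2),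
      (y ∈ (fun v => r • v + (WithLp.equiv 2 (Fin 2 → ℝ)).symm ![1 - r, 0]) '' S ∨
       y ∈ (fun v => r • v +
          (1 - r) • (WithLp.equiv 2 (Fin 2 → ℝ)).symm ![1/2, Real.sqrt 3 / 2]) '' S) →
      ∀ x ∈ (fun v => r • v) '' S,
        dist x y ≤ dist (0 : EuclideanSpace ℝ (Fin 2)) y := by
  have hright : (WithLp.equiv 2 (Fin 2 → ℝ)).symm ![1 - r, 0] = (1 - r) • vertexRight := by
    ext i; fin_cases i <;> simp [vertexRight]
  have htop : (WithLp.equiv 2 (Fin 2 → ℝ)).symm ![1/2, Real.sqrt 3 / 2] = vertexTop := rfl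
  rw [hright, htop] at hinv ⊢
  have hST : S ⊆ triangle := subset_triangle hr0.le (by linarith) hScp hinv.subset
  rintro y hy _ ⟨v, hv, rfl⟩
  have key {e} (he : e = vertexRight ∨ e = vertexTop) {w} (hw : w ∈ S) :
      dist (r • v) (r • w + (1 - r) • e) ≤ dist 0 (r • w + (1 - r) • e) :=
    dist_smul_le_dist_zero hr0.le (by linarith) (triangle_subset_closedBall he (hST hv))
      (inner_nonneg_of_mem_triangle (hST hv) (hST hw))
  rcases hy with ⟨w, hw, rfl⟩ | ⟨w, hw, rfl⟩
  · exact key (Or.inl rfl) hw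
  · exact key (Or.inr rfl) hw

theorem dist_to_other_pieces_maximized_at_origin
(r : ℝ) (hr0 : 0 < r) (hr : r ≤ 1/3)
    (S : Set (EuclideanSpace ℝ (Fin 2))) (hSne : S.Nonempty) (hScp : IsCompact S)
    (hinv : S = (fun v => r • v) '' S ∪
        (fun v => r • v + (WithLp.equiv 2 (Fin 2 → ℝ)).symm ![1 - r, 0]) '' S ∪
        (fun v => r • v +
          (1 - r) • (WithLp.equiv 2 (Fin 2 → ℝ)).symm ![1/2, Real.sqrt 3 / 2]) '' S)
    :
    ∀ y : EuclideanSpace ℝ (Fin 2),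
      (y ∈ (fun v => r • v + (WithLp.equiv 2 (Fin 2 → ℝ)).symm ![1 - r, 0]) '' S ∨
       y ∈ (fun v => r • v +
          (1 - r) • (WithLp.equiv 2 (Fin 2 → ℝ)).symm ![1/2, Real.sqrt 3 / 2]) '' S) →
      ∀ x ∈ (fun v => r • v) '' S,
        dist x y ≤ dist (0 : EuclideanSpace ℝ (Fin 2)) y :=
  dist_to_other_pieces_maximized_at_origin_general r hr0 hr S hScp hinv
end
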